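/- Let (P, ⊕, s) be a problems model. Then for all a, b ∈ P and every formula φ ∈ L_CPL: if a ≤ b and a ∈ s(φ), then b ∈ s(φ). (That is, the upward closure of s, assumed only for atomic propositions, extends to the whole propositional language.) -/
import Mathlib


/-- Formulas of classical propositional logic `L_CPL` over a countable set
of atomic propositions (represented by natural numbers). -/
inductive CPL : Type
  | top : CPL
  | atom : ℕ → CPL
  | neg : CPL → CPL
  | or : CPL → CPL → CPL
  | and : CPL → CPL → CPL
  deriving DecidableEq
/-- A problems model `(P, ⊕, s)`: a nonempty set of decision problems with an
idempotent, commutative, associative fusion operation satisfying unrestricted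
fusion (every subset has a fusion, i.e. a least upper bound w.r.t. the induced
parthood order `a ≤ b ↔ a ⊕ b = b`), together with an assignment `s` of an
upward-closed set of problems to every atomic proposition. -/
structure ProblemsModel where
  P : Type
  Pnonempty : Nonempty P
  fuse : P → P → P
  idem : ∀ a, fuse a a = a
  comm : ∀ a b, fuse a b = fuse b a
  assoc : ∀ a b c, fuse (fuse a b) c = fuse a (fuse b c)
  fusion : ∀ A : Set P, ∃ a, (∀ x ∈ A, fuse x a = a) ∧
    ∀ b, (∀ x ∈ A, fuse x b = b) → fuse a b = b
  satom : ℕ → Set P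
  upward : ∀ (p : ℕ) (a b : P), fuse a b = b → a ∈ satom p → b ∈ satom p

/-- Parthood on decision problems: `a ≤ b` iff `a ⊕ b = b`. -/
def ProblemsModel.le (M : ProblemsModel) (a b : M.P) : Prop := M.fuse a b = b

/-- The extension of the solution assignment `s` to the whole language `L_CPL`:
`s(⊤) = P`, `s(¬φ) = s(φ)`, `s(φ ∨ ψ) = s(φ) ∩ s(ψ)`,
`s(φ ∧ ψ) = {a ⊕ b | a ∈ s(φ), b ∈ s(ψ)}`. -/
def ProblemsModel.sol (M : ProblemsModel) : CPL → Set M.P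
  | .top => Set.univ
  | .atom p => M.satom p
  | .neg φ => M.sol φ
  | .or φ ψ => M.sol φ ∩ M.sol ψ
  | .and φ ψ => {c | ∃ a ∈ M.sol φ, ∃ b ∈ M.sol ψ, c = M.fuse a b}

/-- In any problems model, the solution assignment `s` is upward
closed under parthood on the whole propositional language: if `a ≤ b` and
`a ∈ s(φ)`, then `b ∈ s(φ)`. -/
theorem sol_upward_closed (M : ProblemsModel) (a b : M.P) (φ : CPL)
    (hab : M.le a b) (ha : a ∈ M.sol φ) : b ∈ M.sol φ := by
  induction φ generalizing a b with
  | top => trivial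
  | atom p => exact M.upward p a b hab ha
  | neg φ ih => exact ih a b hab ha
  | or φ ψ ihφ ihψ => exact ⟨ihφ a b hab ha.1, ihψ a b hab ha.2⟩
  | and φ ψ ihφ ihψ =>
    obtain ⟨x, hx, y, hy, rfl⟩ := ha
    refine ⟨x, hx, M.fuse y b, ihψ y (M.fuse y b) ?_ hy, ?_⟩
    · show M.fuse y (M.fuse y b) = M.fuse y b
      rw [← M.assoc, M.idem]
    · have : M.fuse x (M.fuse y b) = b := by
        rw [← M.assoc]; exact hab
      rw [this]
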